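/- Let I be a set and let F be a closed subset of [0,1]^I with F ⊆ B₁⁺(I). Then there exist a closed subset Z of the product space ∏_{n∈ℕ} σ_{2^{n+1}}(I) and a continuous surjection g : Z → F; explicitly, one may take Z to be the preimage of F under the map (x^n)_{n∈ℕ} ↦ (∑_{n∈ℕ} x^n_i / 2^{n+1})_{i∈I}, and g the restriction of this map to Z. -/

import Mathlib

open Set Topology

/-- `σ_n(I) = {x ∈ {0,1}^I : |supp(x)| ≤ n}` (identifying `{0,1}` with `Bool`,
`supp(x) = {i : x i = true}`), as a subset of `I → Bool` with the product topology. -/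
def sigmaSet (I : Type*) (n : ℕ) : Set (I → Bool) := {x | {i | x i = true}.encard ≤ n}

/-- `B₁⁺(I) = {x ∈ [0,1]^I : (x_i) summable and ∑ x_i ≤ 1}`. -/
def B1plus (I : Type*) : Set (I → ℝ) :=
  {x | (∀ i, x i ∈ Set.Icc (0 : ℝ) 1) ∧ Summable x ∧ ∑' i, x i ≤ 1}

/-!
A point `y ∈ F` is reached by expanding each coordinate `y i ∈ [0,1]` in base 2, and `G` is
continuous because each coordinate is a uniformly convergent series of locally constant terms.
If the `n`-th digit of `y i` is `1`, then `y i ≥ 2^{-(n+1)}`; since `∑ᵢ y i ≤ 1`, this can happen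
for at most `2^{n+1}` indices `i`, which puts the `n`-th digit row in `σ_{2^{n+1}}(I)`.
-/

noncomputable def binarySum (c : ℕ → Bool) : ℝ :=
  ∑' n, (if c n then (1 : ℝ) else 0) / 2 ^ (n + 1)

theorem binarySum_eq_ofDigits (c : ℕ → Bool) :
    binarySum c = Real.ofDigits (finTwoEquiv.symm ∘ c) := by
  refine tsum_congr fun n => ?_
  cases hc : c n <;> simp [Real.ofDigitsTerm, finTwoEquiv, div_eq_mul_inv, hc]

theorem continuous_binarySum : Continuous binarySum := by
  simp_rw [funext binarySum_eq_ofDigits]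
  exact Real.continuous_ofDigits.comp
    (continuous_pi fun n => continuous_of_discreteTopology.comp (continuous_apply n))

theorem Icc_subset_range_binarySum : Icc (0 : ℝ) 1 ⊆ range binarySum := by
  intro y hy
  obtain ⟨d, -, rfl⟩ := Real.ofDigits_SurjOn one_lt_two hy
  exact ⟨finTwoEquiv ∘ d, by simp [binarySum_eq_ofDigits, Function.comp_def]⟩

theorem inv_two_pow_le_binarySum {c : ℕ → Bool} {n : ℕ} (hn : c n = true) :
    ((2 : ℝ) ^ (n + 1))⁻¹ ≤ binarySum c := by
  rw [binarySum_eq_ofDigits]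
  calc ((2 : ℝ) ^ (n + 1))⁻¹ = Real.ofDigitsTerm (finTwoEquiv.symm ∘ c) n := by
        simp [Real.ofDigitsTerm, finTwoEquiv, hn]
    _ ≤ Real.ofDigits (finTwoEquiv.symm ∘ c) :=
        Real.summable_ofDigitsTerm.le_tsum n fun _ _ => Real.ofDigitsTerm_nonneg

theorem encard_setOf_le_le_of_tsum_lt {I : Type*} {y : I → ℝ} (hy0 : ∀ i, 0 ≤ y i)
    (hy : Summable y) {ε : ℝ} {N : ℕ} (hN : ∑' i, y i < (N + 1) * ε) :
    {i | ε ≤ y i}.encard ≤ N := by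
  by_contra! hlt
  obtain ⟨t, hts, htcard⟩ := exists_subset_encard_eq (Order.add_one_le_of_lt hlt)
  have htfin : t.Finite := finite_of_encard_eq_coe htcard
  have hcard : htfin.toFinset.card = N + 1 := by
    rw [← ENat.natCast_inj, ← htfin.encard_eq_coe_toFinset_card, htcard]; rfl
  have := calc ((N : ℝ) + 1) * ε = htfin.toFinset.card • ε := by simp [hcard]
    _ ≤ ∑ i ∈ htfin.toFinset, y i :=
        Finset.card_nsmul_le_sum _ _ _ fun i hi => hts (htfin.mem_toFinset.1 hi)
    _ ≤ ∑' i, y i := hy.sum_le_tsum _ fun i _ => hy0 i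
  linarith

theorem mem_sigmaSet_of_binarySum_mem_B1plus {I : Type*} {x : ℕ → I → Bool}
    (hx : (fun i => binarySum fun n => x n i) ∈ B1plus I) (n : ℕ) :
    x n ∈ sigmaSet I (2 ^ (n + 1)) := by
  obtain ⟨hcube, hsum, hle⟩ := hx
  have hsupp : {i | x n i = true} ⊆ {i | ((2 : ℝ) ^ (n + 1))⁻¹ ≤ binarySum fun m => x m i} :=
    fun i hi => inv_two_pow_le_binarySum hi
  refine (encard_le_encard hsupp).trans
    (encard_setOf_le_le_of_tsum_lt (fun i => (hcube i).1) hsum ?_)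
  push_cast
  rw [add_mul, mul_inv_cancel₀ (by positivity)]
  linarith [inv_pos.2 (pow_pos (two_pos (α := ℝ)) (n + 1))]

theorem dyadic_representation_B1plus_general (I : Type*) (F : Set (I → ℝ))
    (hFcl : IsClosed F)
    (hFB : F ⊆ B1plus I) :
    let G : (ℕ → I → Bool) → (I → ℝ) :=
      fun x i => ∑' n : ℕ, (if x n i then (1 : ℝ) else 0) / 2 ^ (n + 1)
    let Z : Set (ℕ → I → Bool) := G ⁻¹' F
    (∀ x ∈ Z, ∀ n : ℕ, x n ∈ sigmaSet I (2 ^ (n + 1))) ∧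
      IsClosed Z ∧ Continuous G ∧ G '' Z = F := by
  intro G Z
  have hG : Continuous G := continuous_pi fun i => continuous_binarySum.comp (by fun_prop)
  refine ⟨fun x hx => mem_sigmaSet_of_binarySum_mem_B1plus (hFB hx), hFcl.preimage hG, hG,
    image_preimage_eq_of_subset fun y hy => ?_⟩
  choose c hc using fun i => Icc_subset_range_binarySum ((hFB hy).1 i)
  exact ⟨fun n i => c i n, funext hc⟩

/-- Dyadic representation of a closed `F ⊆ [0,1]^I` with `F ⊆ B₁⁺(I)`: with
`G((xⁿ)ₙ)ᵢ = ∑ₙ xⁿᵢ/2^{n+1}` and `Z = G⁻¹(F)`, the set `Z` is a closed subset of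
`∏_n σ_{2^{n+1}}(I)` and `G` restricts to a continuous surjection `Z → F`. -/
theorem dyadic_representation_B1plus (I : Type*) (F : Set (I → ℝ))
    (hFcl : IsClosed F) (hFcube : ∀ x ∈ F, ∀ i, x i ∈ Set.Icc (0 : ℝ) 1)
    (hFB : F ⊆ B1plus I) :
    let G : (ℕ → I → Bool) → (I → ℝ) :=
      fun x i => ∑' n : ℕ, (if x n i then (1 : ℝ) else 0) / 2 ^ (n + 1)
    let Z : Set (ℕ → I → Bool) := G ⁻¹' F
    (∀ x ∈ Z, ∀ n : ℕ, x n ∈ sigmaSet I (2 ^ (n + 1))) ∧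
      IsClosed Z ∧ Continuous G ∧ G '' Z = F :=
  dyadic_representation_B1plus_general I F hFcl hFB
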